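/- Let L be a pseudo-Finsler Lagrangian on Ω with spray nonlinear connection N. Let U ⊆ ℝ^m be open, let u : U → ℝ^m be smooth with (x,u(x)) ∈ Ω for all x ∈ U, and let X, Y : U → ℝ^m be smooth vector fields. Then at every point of U one has ∂_X(g_u(u,Y)) − ∂_Y(g_u(u,X)) = g_u(Y, D_X u) − g_u(X, D_Y u) + g_u(u, [X,Y]). -/

import Mathlib

open scoped BigOperators

noncomputable section

/-- `Vec m` is the model space `ℝ^m`. -/
abbrev Vec (m : ℕ) : Type := Fin m → ℝ

variable {m : ℕ}

/-- Partial derivative in the velocity (second) variable: `∂f/∂v^i (x,v)`. -/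
def pdv (f : Vec m → Vec m → ℝ) (i : Fin m) (x v : Vec m) : ℝ :=
  fderiv ℝ (f x) v (Pi.single i 1)

/-- Partial derivative in the position (first) variable: `∂f/∂x^i (x,v)`. -/
def pdx (f : Vec m → Vec m → ℝ) (i : Fin m) (x v : Vec m) : ℝ :=
  fderiv ℝ (fun y => f y v) x (Pi.single i 1)

/-- Vertical Hessian `g_{αβ}(x,v) = ∂²L/∂v^α∂v^β` of the Lagrangian. -/
def gmet (L : Vec m → Vec m → ℝ) (x v : Vec m) : Matrix (Fin m) (Fin m) ℝ :=
  Matrix.of fun α β => pdv (pdv L β) α x v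

/-- Inverse metric `g^{αβ}` (nonsingular matrix inverse). -/
def ginv (L : Vec m → Vec m → ℝ) (x v : Vec m) : Matrix (Fin m) (Fin m) ℝ :=
  (gmet L x v)⁻¹

/-- Geodesic spray coefficients
`G^α = (1/4) g^{αδ}(∂g_{δγ}/∂x^β + ∂g_{δβ}/∂x^γ − ∂g_{βγ}/∂x^δ) v^β v^γ`. -/
def spray (L : Vec m → Vec m → ℝ) (α : Fin m) (x v : Vec m) : ℝ :=
  (1/4) * ∑ δ, ginv L x v α δ *
    (∑ β, ∑ γ,
      (pdx (fun y w => gmet L y w δ γ) β x v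
        + pdx (fun y w => gmet L y w δ β) γ x v
        - pdx (fun y w => gmet L y w β γ) δ x v) * v β * v γ)

/-- The spray nonlinear connection `N^α_μ = ∂G^α/∂v^μ`. -/
def nConn (L : Vec m → Vec m → ℝ) (α μ : Fin m) (x v : Vec m) : ℝ :=
  pdv (spray L α) μ x v

/-- Horizontal derivative `δ_μ f = ∂f/∂x^μ − N^ν_μ ∂f/∂v^ν` for a nonlinear connection `N`. -/
def hderiv (N : Fin m → Fin m → Vec m → Vec m → ℝ) (f : Vec m → Vec m → ℝ)
    (μ : Fin m) (x v : Vec m) : ℝ :=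
  pdx f μ x v - ∑ ν, N ν μ x v * pdv f ν x v

/-- Curvature of the nonlinear connection: `R^μ_{αβ} = δ_α N^μ_β − δ_β N^μ_α`. -/
def curv (N : Fin m → Fin m → Vec m → Vec m → ℝ) (μ α β : Fin m) (x v : Vec m) : ℝ :=
  hderiv N (N μ β) α x v - hderiv N (N μ α) β x v

/-- Ricci scalar `Ric(v) = R^μ{}_{μα} v^α`. -/
def ricciScalar (N : Fin m → Fin m → Vec m → Vec m → ℝ) (x v : Vec m) : ℝ :=
  ∑ α, (∑ μ, curv N μ μ α x v) * v α

/-- Ricci 1-form component `(Ric_v)_α = R^μ{}_{μα}`. -/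
def ricciOne (N : Fin m → Fin m → Vec m → Vec m → ℝ) (α : Fin m) (x v : Vec m) : ℝ :=
  ∑ μ, curv N μ μ α x v

/-- `χ_α := (∂R^γ{}_{αν}/∂v^γ) v^ν`. -/
def chiForm (N : Fin m → Fin m → Vec m → Vec m → ℝ) (α : Fin m) (x v : Vec m) : ℝ :=
  ∑ γ, ∑ ν, pdv (curv N γ α ν) γ x v * v ν

/-- Partial derivative `∂u^α/∂x^μ` of a vector field on the base. -/
def pde (u : Vec m → Vec m) (α μ : Fin m) (x : Vec m) : ℝ :=
  fderiv ℝ (fun y => u y α) x (Pi.single μ 1)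

/-- Covariant derivative `(D_X u)^α = (∂u^α/∂x^μ + N^α_μ(x,u(x))) X^μ`. -/
def covD (L : Vec m → Vec m → ℝ) (u X : Vec m → Vec m) (x : Vec m) : Vec m :=
  fun α => ∑ μ, (pde u α μ x + nConn L α μ x (u x)) * X x μ

/-- Flipped derivative `(D̃_u X)^α = (∂X^α/∂x^μ) u^μ + N^α_μ(x,u(x)) X^μ`. -/
def flipD (L : Vec m → Vec m → ℝ) (u X : Vec m → Vec m) (x : Vec m) : Vec m :=
  fun α => (∑ μ, pde X α μ x * u x μ) + ∑ μ, nConn L α μ x (u x) * X x μ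

/-- Lie bracket `[X,Y]^α = X^μ ∂Y^α/∂x^μ − Y^μ ∂X^α/∂x^μ`. -/
def lieB (X Y : Vec m → Vec m) (x : Vec m) : Vec m :=
  fun α => ∑ μ, (X x μ * pde Y α μ x - Y x μ * pde X α μ x)

/-- Scalar product `g_u(X,Y)(x) = g_{αβ}(x,u(x)) X^α Y^β`. -/
def gProd (L : Vec m → Vec m → ℝ) (u X Y : Vec m → Vec m) (x : Vec m) : ℝ :=
  ∑ α, ∑ β, gmet L x (u x) α β * X x α * Y x β

/-- Directional derivative `∂_X f = X^μ ∂f/∂x^μ`. -/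
def dirD (X : Vec m → Vec m) (f : Vec m → ℝ) (x : Vec m) : ℝ :=
  ∑ μ, X x μ * fderiv ℝ f x (Pi.single μ 1)


abbrev unc (f : Vec m → Vec m → ℝ) : Vec m × Vec m → ℝ := fun p => f p.1 p.2

section
variable {Ω : Set (Vec m × Vec m)} {f : Vec m → Vec m → ℝ} {x v : Vec m}

example (hf : ContDiffOn ℝ (⊤ : ℕ∞) (unc f) Ω) : ContDiffOn ℝ (⊤ : ℕ∞) (unc f) Ω := by
  exact hf.of_le (by simp)

theorem diffAt_unc (hΩ : IsOpen Ω) (hf : ContDiffOn ℝ (⊤ : ℕ∞) (unc f) Ω) (hp : (x, v) ∈ Ω) :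
    DifferentiableAt ℝ (unc f) (x, v) :=
  (hf.differentiableOn (by simp)).differentiableAt (hΩ.mem_nhds hp)

theorem hasF_fst (hΩ : IsOpen Ω) (hf : ContDiffOn ℝ (⊤ : ℕ∞) (unc f) Ω) (hp : (x, v) ∈ Ω) :
    HasFDerivAt (fun y => f y v)
      ((fderiv ℝ (unc f) (x, v)).comp (ContinuousLinearMap.inl ℝ (Vec m) (Vec m))) x :=
  by have h := ((diffAt_unc hΩ hf hp).hasFDerivAt).comp x (hasFDerivAt_prodMk_left (𝕜 := ℝ) x v); exact h

theorem pdx_eq (hΩ : IsOpen Ω) (hf : ContDiffOn ℝ (⊤ : ℕ∞) (unc f) Ω) (hp : (x, v) ∈ Ω) (i : Fin m) :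
    pdx f i x v = fderiv ℝ (unc f) (x, v) (Pi.single i 1, 0) := by
  rw [pdx, (hasF_fst hΩ hf hp).fderiv]; rfl

theorem hasF_snd (hΩ : IsOpen Ω) (hf : ContDiffOn ℝ (⊤ : ℕ∞) (unc f) Ω) (hp : (x, v) ∈ Ω) :
    HasFDerivAt (f x)
      ((fderiv ℝ (unc f) (x, v)).comp (ContinuousLinearMap.inr ℝ (Vec m) (Vec m))) v :=
  ((diffAt_unc hΩ hf hp).hasFDerivAt).comp v (hasFDerivAt_prodMk_right x v)

theorem pdv_eq (hΩ : IsOpen Ω) (hf : ContDiffOn ℝ (⊤ : ℕ∞) (unc f) Ω) (hp : (x, v) ∈ Ω) (i : Fin m) :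
    pdv f i x v = fderiv ℝ (unc f) (x, v) (0, Pi.single i 1) := by
  rw [pdv, (hasF_snd hΩ hf hp).fderiv]; rfl

theorem nice_fderiv (hΩ : IsOpen Ω) (hf : ContDiffOn ℝ (⊤ : ℕ∞) (unc f) Ω) :
    ContDiffOn ℝ (⊤ : ℕ∞) (fderiv ℝ (unc f)) Ω := by
  exact hf.fderiv_of_isOpen hΩ (by simp)

theorem nice_pdx (hΩ : IsOpen Ω) (hf : ContDiffOn ℝ (⊤ : ℕ∞) (unc f) Ω) (i : Fin m) :
    ContDiffOn ℝ (⊤ : ℕ∞) (unc (pdx f i)) Ω := by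
  have h1 : ContDiffOn ℝ (⊤ : ℕ∞) (fun p => fderiv ℝ (unc f) p (Pi.single i 1, 0)) Ω :=
    (nice_fderiv hΩ hf).clm_apply contDiffOn_const
  exact h1.congr fun p hp => by
    have := pdx_eq hΩ hf (x := p.1) (v := p.2) (by simpa using hp) i
    simpa using this
end

section
variable {Ω : Set (Vec m × Vec m)} {f : Vec m → Vec m → ℝ} {x v : Vec m}

theorem diffAt_fderiv (hΩ : IsOpen Ω) (hf : ContDiffOn ℝ (⊤ : ℕ∞) (unc f) Ω) (hp : (x, v) ∈ Ω) :
    DifferentiableAt ℝ (fderiv ℝ (unc f)) (x, v) :=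
  (((nice_fderiv hΩ hf).differentiableOn (by simp)).differentiableAt (hΩ.mem_nhds hp))

theorem fderiv_snd_apply (hΩ : IsOpen Ω) (hf : ContDiffOn ℝ (⊤ : ℕ∞) (unc f) Ω) (hp : (x, v) ∈ Ω)
    (c : Vec m × Vec m) (μ : Fin m) :
    fderiv ℝ (fun w => fderiv ℝ (unc f) (x, w) c) v (Pi.single μ 1)
      = fderiv ℝ (fderiv ℝ (unc f)) (x, v) (0, Pi.single μ 1) c := by
  have h1 : HasFDerivAt (fun w => fderiv ℝ (unc f) (x, w))
      ((fderiv ℝ (fderiv ℝ (unc f)) (x, v)).comp (ContinuousLinearMap.inr ℝ (Vec m) (Vec m))) v :=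
    (diffAt_fderiv hΩ hf hp).hasFDerivAt.comp v (hasFDerivAt_prodMk_right x v)
  have h2 : HasFDerivAt (fun w => fderiv ℝ (unc f) (x, w) c)
      (((ContinuousLinearMap.apply ℝ ℝ c).comp
        ((fderiv ℝ (fderiv ℝ (unc f)) (x, v)).comp (ContinuousLinearMap.inr ℝ (Vec m) (Vec m))))) v :=
    (ContinuousLinearMap.apply ℝ ℝ c).hasFDerivAt.comp v h1
  rw [h2.fderiv]; rfl

theorem fderiv_fst_apply (hΩ : IsOpen Ω) (hf : ContDiffOn ℝ (⊤ : ℕ∞) (unc f) Ω) (hp : (x, v) ∈ Ω)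
    (c : Vec m × Vec m) (μ : Fin m) :
    fderiv ℝ (fun y => fderiv ℝ (unc f) (y, v) c) x (Pi.single μ 1)
      = fderiv ℝ (fderiv ℝ (unc f)) (x, v) (Pi.single μ 1, 0) c := by
  have h1 : HasFDerivAt (fun y => fderiv ℝ (unc f) (y, v))
      ((fderiv ℝ (fderiv ℝ (unc f)) (x, v)).comp (ContinuousLinearMap.inl ℝ (Vec m) (Vec m))) x :=
    (diffAt_fderiv hΩ hf hp).hasFDerivAt.comp x (hasFDerivAt_prodMk_left x v)
  have h2 := (ContinuousLinearMap.apply ℝ ℝ c).hasFDerivAt.comp x h1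
  rw [show (fun y => fderiv ℝ (unc f) (y, v) c)
      = (⇑(ContinuousLinearMap.apply ℝ ℝ c) ∘ fun y => fderiv ℝ (unc f) (y, v)) from rfl,
    h2.fderiv]; rfl

theorem nbhd_snd (hΩ : IsOpen Ω) (hp : (x, v) ∈ Ω) : ∀ᶠ w in nhds v, (x, w) ∈ Ω := by
  have : ContinuousAt (fun w : Vec m => (x, w)) v := by fun_prop
  exact this.preimage_mem_nhds (hΩ.mem_nhds hp)

theorem nbhd_fst (hΩ : IsOpen Ω) (hp : (x, v) ∈ Ω) : ∀ᶠ y in nhds x, (y, v) ∈ Ω := by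
  have : ContinuousAt (fun y : Vec m => (y, v)) x := by fun_prop
  exact this.preimage_mem_nhds (hΩ.mem_nhds hp)

theorem pdv_pdx_eq (hΩ : IsOpen Ω) (hf : ContDiffOn ℝ (⊤ : ℕ∞) (unc f) Ω) (hp : (x, v) ∈ Ω)
    (i μ : Fin m) :
    pdv (pdx f i) μ x v
      = fderiv ℝ (fderiv ℝ (unc f)) (x, v) (0, Pi.single μ 1) (Pi.single i 1, 0) := by
  have he : (fun w => pdx f i x w) =ᶠ[nhds v]
      (fun w => fderiv ℝ (unc f) (x, w) (Pi.single i 1, 0)) :=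
    (nbhd_snd hΩ hp).mono fun w hw => pdx_eq hΩ hf hw i
  rw [pdv, he.fderiv_eq, fderiv_snd_apply hΩ hf hp _ μ]

theorem pdv_pdv_eq (hΩ : IsOpen Ω) (hf : ContDiffOn ℝ (⊤ : ℕ∞) (unc f) Ω) (hp : (x, v) ∈ Ω)
    (i μ : Fin m) :
    pdv (pdv f i) μ x v
      = fderiv ℝ (fderiv ℝ (unc f)) (x, v) (0, Pi.single μ 1) (0, Pi.single i 1) := by
  have he : (fun w => pdv f i x w) =ᶠ[nhds v]
      (fun w => fderiv ℝ (unc f) (x, w) (0, Pi.single i 1)) :=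
    (nbhd_snd hΩ hp).mono fun w hw => pdv_eq hΩ hf hw i
  rw [pdv, he.fderiv_eq, fderiv_snd_apply hΩ hf hp _ μ]

theorem pdx_pdv_eq (hΩ : IsOpen Ω) (hf : ContDiffOn ℝ (⊤ : ℕ∞) (unc f) Ω) (hp : (x, v) ∈ Ω)
    (i μ : Fin m) :
    pdx (pdv f i) μ x v
      = fderiv ℝ (fderiv ℝ (unc f)) (x, v) (Pi.single μ 1, 0) (0, Pi.single i 1) := by
  have he : (fun y => pdv f i y v) =ᶠ[nhds x]
      (fun y => fderiv ℝ (unc f) (y, v) (0, Pi.single i 1)) :=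
    (nbhd_fst hΩ hp).mono fun y hy => pdv_eq hΩ hf hy i
  rw [pdx, he.fderiv_eq, fderiv_fst_apply hΩ hf hp _ μ]

theorem sym2 (hΩ : IsOpen Ω) (hf : ContDiffOn ℝ (⊤ : ℕ∞) (unc f) Ω) (hp : (x, v) ∈ Ω)
    (a b : Vec m × Vec m) :
    fderiv ℝ (fderiv ℝ (unc f)) (x, v) a b = fderiv ℝ (fderiv ℝ (unc f)) (x, v) b a := by
  have h1 : ContDiffAt ℝ (⊤ : ℕ∞) (unc f) (x, v) := hf.contDiffAt (hΩ.mem_nhds hp)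
  exact (h1.isSymmSndFDerivAt (by rw [minSmoothness_of_isRCLikeNormedField]; exact WithTop.coe_le_coe.mpr (le_top : (2 : ℕ∞) ≤ ⊤))).eq a b

theorem pdv_pdv_comm (hΩ : IsOpen Ω) (hf : ContDiffOn ℝ (⊤ : ℕ∞) (unc f) Ω) (hp : (x, v) ∈ Ω)
    (i μ : Fin m) : pdv (pdv f i) μ x v = pdv (pdv f μ) i x v := by
  rw [pdv_pdv_eq hΩ hf hp, pdv_pdv_eq hΩ hf hp, sym2 hΩ hf hp]

theorem pdv_pdx_comm (hΩ : IsOpen Ω) (hf : ContDiffOn ℝ (⊤ : ℕ∞) (unc f) Ω) (hp : (x, v) ∈ Ω)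
    (i μ : Fin m) : pdv (pdx f i) μ x v = pdx (pdv f μ) i x v := by
  rw [pdv_pdx_eq hΩ hf hp, pdx_pdv_eq hΩ hf hp, sym2 hΩ hf hp]
end

theorem euler {h : Vec m → ℝ} {v : Vec m} {k : ℕ} (hd : DifferentiableAt ℝ h v)
    (hh : ∀ᶠ s : ℝ in nhds 1, h (s • v) = s ^ k * h v) :
    fderiv ℝ h v v = k * h v := by
  have hc : HasDerivAt (fun s : ℝ => s • v) v 1 := by
    simpa using (hasDerivAt_id (1 : ℝ)).smul_const v
  have h1 : HasDerivAt (fun s : ℝ => h (s • v)) (fderiv ℝ h v v) 1 := by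
    have hd' : HasFDerivAt h (fderiv ℝ h v) ((1 : ℝ) • v) := by
      rw [one_smul]; exact hd.hasFDerivAt
    exact hd'.comp_hasDerivAt 1 hc
  have h2 : HasDerivAt (fun s : ℝ => s ^ k * h v) ((k : ℝ) * h v) 1 := by
    simpa using (hasDerivAt_pow k (1 : ℝ)).mul_const (h v)
  exact h1.unique (h2.congr_of_eventuallyEq hh)

theorem vec_eq_sum (w : Vec m) : w = ∑ γ, w γ • (Pi.single γ (1 : ℝ) : Vec m) := by
  conv_lhs => rw [← Finset.univ_sum_single w]
  refine Finset.sum_congr rfl fun γ _ => ?_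
  rw [← Pi.single_smul, smul_eq_mul, mul_one]

theorem fderiv_pt_eq_sum {h : Vec m → ℝ} {v w : Vec m} :
    fderiv ℝ h v w = ∑ γ, w γ * fderiv ℝ h v (Pi.single γ 1) := by
  conv_lhs => rw [vec_eq_sum w]
  rw [map_sum]
  exact Finset.sum_congr rfl fun γ _ => by rw [map_smul, smul_eq_mul]

section
variable {Ω : Set (Vec m × Vec m)} {f : Vec m → Vec m → ℝ} {x v : Vec m}

def HomOn (Ω : Set (Vec m × Vec m)) (f : Vec m → Vec m → ℝ) (k : ℕ) : Prop :=
  ∀ p ∈ Ω, ∀ s : ℝ, 0 < s → f p.1 (s • p.2) = s ^ k * f p.1 p.2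

theorem pdx_congr_fn (hΩ : IsOpen Ω) (hp : (x, v) ∈ Ω) {f₁ f₂ : Vec m → Vec m → ℝ}
    (h : ∀ p ∈ Ω, f₁ p.1 p.2 = f₂ p.1 p.2) (i : Fin m) : pdx f₁ i x v = pdx f₂ i x v := by
  have he : (fun y => f₁ y v) =ᶠ[nhds x] (fun y => f₂ y v) :=
    (nbhd_fst hΩ hp).mono fun y hy => h (y, v) hy
  rw [pdx, pdx, he.fderiv_eq]

theorem homOn_pdv (hΩ : IsOpen Ω) (hf : ContDiffOn ℝ (⊤ : ℕ∞) (unc f) Ω)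
    (hΩcone : ∀ p ∈ Ω, ∀ s : ℝ, 0 < s → (p.1, s • p.2) ∈ Ω) {k : ℕ}
    (hhom : HomOn Ω f (k + 1)) (i : Fin m) : HomOn Ω (pdv f i) k := by
  rintro ⟨x, v⟩ hp s hs
  have hps : (x, s • v) ∈ Ω := hΩcone (x, v) hp s hs
  have he : (fun w => f x (s • w)) =ᶠ[nhds v] (fun w => s ^ (k + 1) * f x w) :=
    (nbhd_snd hΩ hp).mono fun w hw => hhom (x, w) hw s hs
  have hd2 : DifferentiableAt ℝ (f x) v := (hasF_snd hΩ hf hp).differentiableAt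
  have hsm : HasFDerivAt (fun w : Vec m => s • w) (s • ContinuousLinearMap.id ℝ (Vec m)) v :=
    (hasFDerivAt_id v).const_smul s
  have hcomp : HasFDerivAt (fun w => f x (s • w))
      ((fderiv ℝ (f x) (s • v)).comp (s • ContinuousLinearMap.id ℝ (Vec m))) v :=
    ((hasF_snd hΩ hf hps).differentiableAt.hasFDerivAt).comp v hsm
  have h1 : fderiv ℝ (fun w => f x (s • w)) v (Pi.single i 1)
      = s * pdv f i x (s • v) := by
    rw [hcomp.fderiv]
    simp [pdv, mul_comm]
  have h2 : fderiv ℝ (fun w => s ^ (k + 1) * f x w) v (Pi.single i 1)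
      = s ^ (k + 1) * pdv f i x v := by
    have := (hd2.hasFDerivAt.const_mul (s ^ (k + 1))).fderiv
    rw [show (fun w => s ^ (k + 1) * f x w) = (fun w => s ^ (k + 1) * (f x) w) from rfl, this]
    rfl
  have := he.fderiv_eq (𝕜 := ℝ)
  have h3 : s * pdv f i x (s • v) = s ^ (k + 1) * pdv f i x v := by
    rw [← h1, ← h2, this]
  show pdv f i x (s • v) = s ^ k * pdv f i x v
  have hs0 : s ≠ 0 := ne_of_gt hs
  have h4 : s * pdv f i x (s • v) = s * (s ^ k * pdv f i x v) := by
    rw [h3]; ring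
  exact mul_left_cancel₀ hs0 h4

theorem euler_pdv (hΩ : IsOpen Ω) (hf : ContDiffOn ℝ (⊤ : ℕ∞) (unc f) Ω) {k : ℕ}
    (hhom : HomOn Ω f k) (hp : (x, v) ∈ Ω) :
    ∑ γ, pdv f γ x v * v γ = k * f x v := by
  have hd : DifferentiableAt ℝ (f x) v := (hasF_snd hΩ hf hp).differentiableAt
  have hh : ∀ᶠ s : ℝ in nhds 1, f x (s • v) = s ^ k * f x v :=
    (eventually_gt_nhds (by norm_num : (0:ℝ) < 1)).mono fun s hs => hhom (x, v) hp s hs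
  have h1 := euler hd hh
  rw [fderiv_pt_eq_sum] at h1
  rw [← h1]
  exact Finset.sum_congr rfl fun γ _ => mul_comm _ _

theorem pde_eq {u : Vec m → Vec m} (hu : DifferentiableAt ℝ u x) (α μ : Fin m) :
    pde u α μ x = fderiv ℝ u x (Pi.single μ 1) α := by
  have h := (ContinuousLinearMap.proj (R := ℝ) (φ := fun _ : Fin m => ℝ) α).hasFDerivAt.comp
    x hu.hasFDerivAt
  rw [pde, show (fun y => u y α)
      = (⇑(ContinuousLinearMap.proj (R := ℝ) (φ := fun _ : Fin m => ℝ) α) ∘ u) from rfl,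
    h.fderiv]; rfl

theorem clm_snd_sum (T : Vec m × Vec m →L[ℝ] ℝ) (w : Vec m) :
    T (0, w) = ∑ ν, w ν * T (0, Pi.single ν 1) := by
  have h : ((0 : Vec m), w) = ∑ ν, w ν • (((0 : Vec m), (Pi.single ν 1 : Vec m))) := by
    rw [Prod.ext_iff]
    constructor
    · simp [Prod.fst_sum]
    · rw [Prod.snd_sum]
      simpa using vec_eq_sum w
  rw [h, map_sum]
  exact Finset.sum_congr rfl fun ν _ => by rw [map_smul, smul_eq_mul]

theorem chain_rule (hΩ : IsOpen Ω) (hf : ContDiffOn ℝ (⊤ : ℕ∞) (unc f) Ω) {u : Vec m → Vec m}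
    (hu : DifferentiableAt ℝ u x) (hp : (x, u x) ∈ Ω) (μ : Fin m) :
    fderiv ℝ (fun y => f y (u y)) x (Pi.single μ 1)
      = pdx f μ x (u x) + ∑ ν, pde u ν μ x * pdv f ν x (u x) := by
  have hcomp : HasFDerivAt (fun y => f y (u y))
      ((fderiv ℝ (unc f) (x, u x)).comp
        ((ContinuousLinearMap.id ℝ (Vec m)).prod (fderiv ℝ u x))) x :=
    by have h := (diffAt_unc hΩ hf hp).hasFDerivAt.comp x ((hasFDerivAt_id x).prodMk hu.hasFDerivAt); exact h
  rw [hcomp.fderiv]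
  have h1 : (((ContinuousLinearMap.id ℝ (Vec m)).prod (fderiv ℝ u x)) (Pi.single μ 1))
      = ((Pi.single μ 1 : Vec m), fderiv ℝ u x (Pi.single μ 1)) := rfl
  show (fderiv ℝ (unc f) (x, u x)) (((Pi.single μ 1 : Vec m), fderiv ℝ u x (Pi.single μ 1))) = _
  have hsplit : ((Pi.single μ 1 : Vec m), fderiv ℝ u x (Pi.single μ 1))
      = ((Pi.single μ 1 : Vec m), (0 : Vec m)) + ((0 : Vec m), fderiv ℝ u x (Pi.single μ 1)) := by
    simp
  rw [hsplit, map_add, clm_snd_sum, pdx_eq hΩ hf hp]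
  congr 1
  exact Finset.sum_congr rfl fun ν _ => by
    rw [pdv_eq hΩ hf hp, pde_eq hu]
end

section
variable {Ω : Set (Vec m × Vec m)} {f : Vec m → Vec m → ℝ} {x v : Vec m}

theorem nice_pdv (hΩ : IsOpen Ω) (hf : ContDiffOn ℝ (⊤ : ℕ∞) (unc f) Ω) (i : Fin m) :
    ContDiffOn ℝ (⊤ : ℕ∞) (unc (pdv f i)) Ω := by
  have h1 : ContDiffOn ℝ (⊤ : ℕ∞) (fun p => fderiv ℝ (unc f) p (0, Pi.single i 1)) Ω :=
    (nice_fderiv hΩ hf).clm_apply contDiffOn_const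
  exact h1.congr fun p hp => by
    have := pdv_eq hΩ hf (x := p.1) (v := p.2) (by simpa using hp) i
    simpa using this

theorem diffAt_prod {ι : Type*} [DecidableEq ι] (s : Finset ι) {g : ι → Vec m → ℝ} {v : Vec m}
    (h : ∀ i, DifferentiableAt ℝ (g i) v) :
    DifferentiableAt ℝ (fun w => ∏ i ∈ s, g i w) v := by
  induction s using Finset.induction with
  | empty => simpa using differentiableAt_const (1 : ℝ)
  | insert _ _ hnot ih =>
      simp only [Finset.prod_insert hnot]
      exact (h _).mul ih

theorem diffAt_det {M : Vec m → Matrix (Fin m) (Fin m) ℝ} {v : Vec m}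
    (h : ∀ i j, DifferentiableAt ℝ (fun w => M w i j) v) :
    DifferentiableAt ℝ (fun w => (M w).det) v := by
  simp only [Matrix.det_apply']
  exact DifferentiableAt.fun_sum fun σ _ =>
    ((diffAt_prod Finset.univ fun i => h (σ i) i)).const_mul _

theorem diffAt_adjugate {M : Vec m → Matrix (Fin m) (Fin m) ℝ} {v : Vec m}
    (h : ∀ i j, DifferentiableAt ℝ (fun w => M w i j) v) (i j : Fin m) :
    DifferentiableAt ℝ (fun w => (M w).adjugate i j) v := by
  simp only [Matrix.adjugate_apply]
  apply diffAt_det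
  intro a b
  simp only [Matrix.updateRow_apply]
  by_cases hab : a = j
  · simp [hab]
  · simp only [hab, if_false]
    exact h a b

theorem diffAt_inv_entry {M : Vec m → Matrix (Fin m) (Fin m) ℝ} {v : Vec m}
    (h : ∀ i j, DifferentiableAt ℝ (fun w => M w i j) v)
    (hdet : (M v).det ≠ 0) (i j : Fin m) :
    DifferentiableAt ℝ (fun w => (M w)⁻¹ i j) v := by
  have heq : (fun w => (M w)⁻¹ i j) = fun w => ((M w).det)⁻¹ * (M w).adjugate i j := by
    funext w
    rw [Matrix.inv_def, Matrix.smul_apply, Ring.inverse_eq_inv, smul_eq_mul]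
  rw [heq]
  exact ((diffAt_det h).inv hdet).mul (diffAt_adjugate h i j)
end

structure Good (Ω : Set (Vec m × Vec m)) (L : Vec m → Vec m → ℝ) : Prop where
  op : IsOpen Ω
  cone : ∀ p ∈ Ω, ∀ s : ℝ, 0 < s → (p.1, s • p.2) ∈ Ω
  smooth : ContDiffOn ℝ (⊤ : ℕ∞) (unc L) Ω
  hom : ∀ p ∈ Ω, ∀ s : ℝ, 0 < s → L p.1 (s • p.2) = s ^ 2 * L p.1 p.2
  inv : ∀ p ∈ Ω, IsUnit (gmet L p.1 p.2).det

section
variable {Ω : Set (Vec m × Vec m)} {L : Vec m → Vec m → ℝ} {x v : Vec m}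

theorem Good.nicel (hG : Good Ω L) (i : Fin m) : ContDiffOn ℝ (⊤ : ℕ∞) (unc (pdv L i)) Ω :=
  nice_pdv hG.op hG.smooth i
theorem Good.niceg (hG : Good Ω L) (α β : Fin m) :
    ContDiffOn ℝ (⊤ : ℕ∞) (unc (fun x v => gmet L x v α β)) Ω :=
  nice_pdv hG.op (hG.nicel β) α
theorem Good.homL (hG : Good Ω L) : HomOn Ω L 2 := hG.hom
theorem Good.homl (hG : Good Ω L) (i : Fin m) : HomOn Ω (pdv L i) 1 :=
  homOn_pdv hG.op hG.smooth hG.cone hG.homL i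

theorem gsym (hG : Good Ω L) (hp : (x, v) ∈ Ω) (α β : Fin m) :
    gmet L x v α β = gmet L x v β α :=
  pdv_pdv_comm hG.op hG.smooth hp β α

theorem eulerL (hG : Good Ω L) (hp : (x, v) ∈ Ω) :
    ∑ γ, pdv L γ x v * v γ = 2 * L x v := by
  have h := euler_pdv hG.op hG.smooth hG.homL hp
  simpa using h

theorem eulerg (hG : Good Ω L) (hp : (x, v) ∈ Ω) (ε : Fin m) :
    ∑ γ, gmet L x v ε γ * v γ = pdv L ε x v := by
  have h := euler_pdv hG.op (hG.nicel ε) (hG.homl ε) hp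
  simp only [Nat.cast_one, one_mul] at h
  rw [← h]
  refine Finset.sum_congr rfl fun γ _ => ?_
  rw [gsym hG hp ε γ]; rfl

theorem gvv (hG : Good Ω L) (hp : (x, v) ∈ Ω) :
    ∑ β, ∑ γ, gmet L x v β γ * v β * v γ = 2 * L x v := by
  rw [← eulerL hG hp]
  refine Finset.sum_congr rfl fun β _ => ?_
  rw [show ∑ γ, gmet L x v β γ * v β * v γ = (∑ γ, gmet L x v β γ * v γ) * v β by
    rw [Finset.sum_mul]; exact Finset.sum_congr rfl fun γ _ => by ring]
  rw [eulerg hG hp β]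

theorem pdx_sum_mul_const {h : Fin m → Vec m → ℝ} {c : Fin m → ℝ} {x : Vec m}
    (hd : ∀ γ, DifferentiableAt ℝ (h γ) x) (b : Fin m) :
    fderiv ℝ (fun y => ∑ γ, h γ y * c γ) x (Pi.single b 1)
      = ∑ γ, fderiv ℝ (h γ) x (Pi.single b 1) * c γ := by
  have h1 := (HasFDerivAt.fun_sum (u := Finset.univ)
    (fun γ _ => ((hd γ).hasFDerivAt.mul_const (c γ)))).fderiv
  rw [h1, ContinuousLinearMap.sum_apply]
  exact Finset.sum_congr rfl fun γ _ => by
    rw [ContinuousLinearMap.smul_apply, smul_eq_mul]; ring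

theorem pdx_sum2_mul_const {h : Fin m → Fin m → Vec m → ℝ} {c : Fin m → Fin m → ℝ} {x : Vec m}
    (hd : ∀ β γ, DifferentiableAt ℝ (h β γ) x) (b : Fin m) :
    fderiv ℝ (fun y => ∑ β, ∑ γ, h β γ y * c β γ) x (Pi.single b 1)
      = ∑ β, ∑ γ, fderiv ℝ (h β γ) x (Pi.single b 1) * c β γ := by
  have h1 := (HasFDerivAt.fun_sum (u := Finset.univ) (fun β _ =>
    HasFDerivAt.fun_sum (u := Finset.univ)
      (fun γ _ => ((hd β γ).hasFDerivAt.mul_const (c β γ))))).fderiv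
  rw [h1, ContinuousLinearMap.sum_apply]
  refine Finset.sum_congr rfl fun β _ => ?_
  rw [ContinuousLinearMap.sum_apply]
  exact Finset.sum_congr rfl fun γ _ => by
    rw [ContinuousLinearMap.smul_apply, smul_eq_mul]; ring

theorem diffAt_gfst (hG : Good Ω L) (hp : (x, v) ∈ Ω) (α β : Fin m) :
    DifferentiableAt ℝ (fun y => gmet L y v α β) x :=
  (hasF_fst hG.op (hG.niceg α β) hp).differentiableAt

theorem pdx_eulerg (hG : Good Ω L) (hp : (x, v) ∈ Ω) (ε b : Fin m) :
    ∑ γ, pdx (fun y w => gmet L y w ε γ) b x v * v γ = pdx (pdv L ε) b x v := by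
  have key : pdx (fun y w => ∑ γ, gmet L y w ε γ * w γ) b x v = pdx (pdv L ε) b x v :=
    pdx_congr_fn hG.op hp (fun p hp' => eulerg hG (by simpa using hp') ε) b
  rw [← key]
  show ∑ γ, fderiv ℝ (fun y => gmet L y v ε γ) x (Pi.single b 1) * v γ
      = fderiv ℝ (fun y => ∑ γ, gmet L y v ε γ * v γ) x (Pi.single b 1)
  rw [pdx_sum_mul_const (fun γ => diffAt_gfst hG hp ε γ) b]

theorem pdx_gvv (hG : Good Ω L) (hp : (x, v) ∈ Ω) (ε : Fin m) :
    ∑ β, ∑ γ, pdx (fun y w => gmet L y w β γ) ε x v * v β * v γ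
      = 2 * pdx L ε x v := by
  have key : pdx (fun y w => ∑ β, ∑ γ, gmet L y w β γ * (w β * w γ)) ε x v
      = pdx (fun y w => 2 * L y w) ε x v := by
    refine pdx_congr_fn hG.op hp (fun p hp' => ?_) ε
    rw [← gvv hG (by simpa using hp')]
    exact Finset.sum_congr rfl fun β _ => Finset.sum_congr rfl fun γ _ => by ring
  have hR : pdx (fun y w => 2 * L y w) ε x v = 2 * pdx L ε x v := by
    have hd : DifferentiableAt ℝ (fun y => L y v) x :=
      (hasF_fst hG.op hG.smooth hp).differentiableAt
    have h2 := (hd.hasFDerivAt.const_mul (2 : ℝ)).fderiv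
    show fderiv ℝ (fun y => 2 * L y v) x (Pi.single ε 1) = _
    rw [h2, ContinuousLinearMap.smul_apply, smul_eq_mul]; rfl
  rw [← hR, ← key]
  show ∑ β, ∑ γ, fderiv ℝ (fun y => gmet L y v β γ) x (Pi.single ε 1) * v β * v γ
      = fderiv ℝ (fun y => ∑ β, ∑ γ, gmet L y v β γ * (v β * v γ)) x (Pi.single ε 1)
  rw [pdx_sum2_mul_const (fun β γ => diffAt_gfst hG hp β γ) ε]
  exact Finset.sum_congr rfl fun β _ => Finset.sum_congr rfl fun γ _ => by ring
end

section
variable {Ω : Set (Vec m × Vec m)} {L : Vec m → Vec m → ℝ} {x v : Vec m}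

theorem gG (hG : Good Ω L) (hp : (x, v) ∈ Ω) (ε : Fin m) :
    ∑ α, gmet L x v ε α * spray L α x v
      = (1/2) * ((∑ b, pdx (pdv L ε) b x v * v b) - pdx L ε x v) := by
  set S : Fin m → ℝ := fun δ => ∑ β, ∑ γ,
      (pdx (fun y w => gmet L y w δ γ) β x v
        + pdx (fun y w => gmet L y w δ β) γ x v
        - pdx (fun y w => gmet L y w β γ) δ x v) * v β * v γ with hS
  have hspray : ∀ α, spray L α x v = (1/4) * ∑ δ, ginv L x v α δ * S δ := fun α => rfl
  have hid : ∀ δ, ∑ α, gmet L x v ε α * ginv L x v α δ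
      = if ε = δ then (1 : ℝ) else 0 := by
    intro δ
    have h := Matrix.mul_nonsing_inv (gmet L x v) (hG.inv _ hp)
    have h2 := congrFun (congrFun h ε) δ
    rw [Matrix.mul_apply] at h2
    rw [show ginv L x v = (gmet L x v)⁻¹ from rfl]
    rw [h2, Matrix.one_apply]
  have step1 : ∑ α, gmet L x v ε α * spray L α x v
      = ∑ δ, (1/4) * ((∑ α, gmet L x v ε α * ginv L x v α δ) * S δ) := by
    simp only [hspray, Finset.mul_sum, Finset.sum_mul]
    rw [Finset.sum_comm]
    exact Finset.sum_congr rfl fun δ _ => Finset.sum_congr rfl fun α _ => by ring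
  rw [step1]
  simp only [hid, ite_mul, one_mul, zero_mul, mul_ite, mul_zero]
  rw [Finset.sum_ite_eq Finset.univ ε (fun δ => (1/4 : ℝ) * S δ)]
  simp only [Finset.mem_univ, if_true]
  have hT1 : ∑ β, ∑ γ, pdx (fun y w => gmet L y w ε γ) β x v * v β * v γ
      = ∑ b, pdx (pdv L ε) b x v * v b := by
    refine Finset.sum_congr rfl fun β _ => ?_
    rw [← pdx_eulerg hG hp ε β, Finset.sum_mul]
    exact Finset.sum_congr rfl fun γ _ => by ring
  have hT2 : ∑ β, ∑ γ, pdx (fun y w => gmet L y w ε β) γ x v * v β * v γ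
      = ∑ b, pdx (pdv L ε) b x v * v b := by
    rw [Finset.sum_comm]
    refine Finset.sum_congr rfl fun b _ => ?_
    rw [← pdx_eulerg hG hp ε b, Finset.sum_mul]
  have hT3 := pdx_gvv hG hp ε
  have hSe : S ε = 2 * (∑ b, pdx (pdv L ε) b x v * v b) - 2 * pdx L ε x v := by
    rw [hS]
    simp only [add_mul, sub_mul, Finset.sum_add_distrib, Finset.sum_sub_distrib]
    rw [hT1, hT2, hT3]
    ring
  rw [hSe]
  ring
end

section
variable {Ω : Set (Vec m × Vec m)} {L : Vec m → Vec m → ℝ} {x v : Vec m}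

theorem diffAt_gsnd (hG : Good Ω L) (hp : (x, v) ∈ Ω) (α β : Fin m) :
    DifferentiableAt ℝ (fun w => gmet L x w α β) v :=
  (hasF_snd hG.op (hG.niceg α β) hp).differentiableAt

theorem diffAt_pdxg_snd (hG : Good Ω L) (hp : (x, v) ∈ Ω) (δ γ b : Fin m) :
    DifferentiableAt ℝ (fun w => pdx (fun y u => gmet L y u δ γ) b x w) v :=
  (hasF_snd hG.op (nice_pdx hG.op (hG.niceg δ γ) b) hp).differentiableAt

theorem diffAt_ginv (hG : Good Ω L) (hp : (x, v) ∈ Ω) (α δ : Fin m) :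
    DifferentiableAt ℝ (fun w => ginv L x w α δ) v := by
  have hdet : (gmet L x v).det ≠ 0 := (hG.inv _ hp).ne_zero
  exact diffAt_inv_entry (fun i j => diffAt_gsnd hG hp i j) hdet α δ

theorem diffAt_spray (hG : Good Ω L) (hp : (x, v) ∈ Ω) (α : Fin m) :
    DifferentiableAt ℝ (fun w => spray L α x w) v := by
  apply DifferentiableAt.const_mul
  apply DifferentiableAt.fun_sum
  intro δ _
  apply (diffAt_ginv hG hp α δ).mul
  apply DifferentiableAt.fun_sum
  intro β _
  apply DifferentiableAt.fun_sum
  intro γ _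
  apply DifferentiableAt.mul
  apply DifferentiableAt.mul
  · exact ((diffAt_pdxg_snd hG hp δ γ β).add (diffAt_pdxg_snd hG hp δ β γ)).sub
      (diffAt_pdxg_snd hG hp β γ δ)
  · exact differentiableAt_apply β v
  · exact differentiableAt_apply γ v

theorem keyII (hG : Good Ω L) (hp : (x, v) ∈ Ω) (ε μ : Fin m) :
    (∑ α, pdv (pdv (pdv L α) ε) μ x v * spray L α x v)
      + (∑ α, gmet L x v ε α * nConn L α μ x v)
    = (1/2) * ((∑ b, pdx (pdv (pdv L ε) μ) b x v * v b)
        + pdx (pdv L ε) μ x v - pdx (pdv L μ) ε x v) := by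
  have he : (fun w => ∑ α, gmet L x w ε α * spray L α x w) =ᶠ[nhds v]
      (fun w => (1/2) * ((∑ b, pdx (pdv L ε) b x w * w b) - pdx L ε x w)) :=
    (nbhd_snd hG.op hp).mono fun w hw => gG hG hw ε
  have heq := he.fderiv_eq (𝕜 := ℝ)
  -- left side derivative
  have hL1 : HasFDerivAt (fun w => ∑ α, gmet L x w ε α * spray L α x w)
      (∑ α, (gmet L x v ε α • fderiv ℝ (fun w => spray L α x w) v
        + spray L α x v • fderiv ℝ (fun w => gmet L x w ε α) v)) v :=
    HasFDerivAt.fun_sum fun α _ =>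
      (diffAt_gsnd hG hp ε α).hasFDerivAt.mul (diffAt_spray hG hp α).hasFDerivAt
  have eL : fderiv ℝ (fun w => ∑ α, gmet L x w ε α * spray L α x w) v (Pi.single μ 1)
      = ∑ α, (gmet L x v ε α * nConn L α μ x v
          + spray L α x v * pdv (pdv (pdv L α) ε) μ x v) := by
    rw [hL1.fderiv, ContinuousLinearMap.sum_apply]
    refine Finset.sum_congr rfl fun α _ => ?_
    rw [ContinuousLinearMap.add_apply, ContinuousLinearMap.smul_apply,
      ContinuousLinearMap.smul_apply, smul_eq_mul, smul_eq_mul]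
    rfl
  -- right side derivative
  have hdl : ∀ b : Fin m, DifferentiableAt ℝ (fun w => pdx (pdv L ε) b x w) v :=
    fun b => (hasF_snd hG.op (nice_pdx hG.op (hG.nicel ε) b) hp).differentiableAt
  have hdL : DifferentiableAt ℝ (fun w => pdx L ε x w) v :=
    (hasF_snd hG.op (nice_pdx hG.op hG.smooth ε) hp).differentiableAt
  have hR1 : HasFDerivAt (fun w => (1/2) * ((∑ b, pdx (pdv L ε) b x w * w b) - pdx L ε x w))
      ((1/2 : ℝ) • ((∑ b, (pdx (pdv L ε) b x v • (ContinuousLinearMap.proj b :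
          Vec m →L[ℝ] ℝ) + v b • fderiv ℝ (fun w => pdx (pdv L ε) b x w) v))
        - fderiv ℝ (fun w => pdx L ε x w) v)) v := by
    apply HasFDerivAt.const_mul
    apply HasFDerivAt.sub _ hdL.hasFDerivAt
    apply HasFDerivAt.fun_sum
    intro b _
    have hproj : HasFDerivAt (fun w : Vec m => w b)
        (ContinuousLinearMap.proj b : Vec m →L[ℝ] ℝ) v := by
      exact (ContinuousLinearMap.proj (R := ℝ) (φ := fun _ : Fin m => ℝ) b).hasFDerivAt
    exact (hdl b).hasFDerivAt.mul hproj
  have eR : fderiv ℝ (fun w => (1/2) * ((∑ b, pdx (pdv L ε) b x w * w b) - pdx L ε x w)) v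
        (Pi.single μ 1)
      = (1/2) * ((∑ b, (pdx (pdv L ε) b x v * (Pi.single μ 1 : Vec m) b
          + v b * pdv (pdx (pdv L ε) b) μ x v)) - pdv (pdx L ε) μ x v) := by
    rw [hR1.fderiv]
    rw [ContinuousLinearMap.smul_apply, ContinuousLinearMap.sub_apply,
      ContinuousLinearMap.sum_apply, smul_eq_mul]
    congr 2
  have hmain : ∑ α, (gmet L x v ε α * nConn L α μ x v
          + spray L α x v * pdv (pdv (pdv L α) ε) μ x v)
      = (1/2) * ((∑ b, (pdx (pdv L ε) b x v * (Pi.single μ 1 : Vec m) b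
          + v b * pdv (pdx (pdv L ε) b) μ x v)) - pdv (pdx L ε) μ x v) := by
    rw [← eL, ← eR, heq]
  -- simplify the single sum
  have hsingle : ∑ b, pdx (pdv L ε) b x v * (Pi.single μ 1 : Vec m) b = pdx (pdv L ε) μ x v := by
    rw [Finset.sum_eq_single μ]
    · simp
    · intro b _ hb
      simp [Pi.single_apply, hb]
    · intro h; exact absurd (Finset.mem_univ μ) h
  -- swaps
  have hswap1 : ∀ b, pdv (pdx (pdv L ε) b) μ x v = pdx (pdv (pdv L ε) μ) b x v :=
    fun b => pdv_pdx_comm hG.op (hG.nicel ε) hp b μ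
  have hswap2 : pdv (pdx L ε) μ x v = pdx (pdv L μ) ε x v :=
    pdv_pdx_comm hG.op hG.smooth hp ε μ
  simp only [Finset.sum_add_distrib] at hmain
  rw [hsingle, hswap2] at hmain
  simp only [hswap1] at hmain
  have c1 : (∑ α, spray L α x v * pdv (pdv (pdv L α) ε) μ x v)
      = ∑ α, pdv (pdv (pdv L α) ε) μ x v * spray L α x v :=
    Finset.sum_congr rfl fun α _ => mul_comm _ _
  have c2 : (∑ b, v b * pdx (pdv (pdv L ε) μ) b x v)
      = ∑ b, pdx (pdv (pdv L ε) μ) b x v * v b :=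
    Finset.sum_congr rfl fun b _ => mul_comm _ _
  rw [c1, c2] at hmain
  linarith [hmain]

theorem keystar (hG : Good Ω L) (hp : (x, v) ∈ Ω) (ε μ : Fin m) :
    (∑ α, gmet L x v ε α * nConn L α μ x v) - (∑ α, gmet L x v μ α * nConn L α ε x v)
      = pdx (pdv L ε) μ x v - pdx (pdv L μ) ε x v := by
  have h1 := keyII hG hp ε μ
  have h2 := keyII hG hp μ ε
  have hsym3 : (∑ α, pdv (pdv (pdv L α) ε) μ x v * spray L α x v)
      = ∑ α, pdv (pdv (pdv L α) μ) ε x v * spray L α x v :=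
    Finset.sum_congr rfl fun α _ => by
      rw [pdv_pdv_comm hG.op (hG.nicel α) hp ε μ]
  have hsymg : (∑ b, pdx (pdv (pdv L ε) μ) b x v * v b)
      = ∑ b, pdx (pdv (pdv L μ) ε) b x v * v b :=
    Finset.sum_congr rfl fun b _ => by
      rw [pdx_congr_fn (f₁ := pdv (pdv L ε) μ) (f₂ := pdv (pdv L μ) ε) hG.op hp
        (fun p hp' => gsym hG (by simpa using hp') μ ε) b]
  linarith [h1, h2, hsym3, hsymg]
end

theorem final_algebra {n : ℕ} (G N P lx dX dY : Fin n → Fin n → ℝ) (l a b c : Fin n → ℝ)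
    (hsym : ∀ α β, G α β = G β α)
    (heuler : ∀ β, ∑ α, G α β * c α = l β)
    (hstar : ∀ ε μ, (∑ β, G ε β * N β μ) - (∑ β, G μ β * N β ε) = lx ε μ - lx μ ε) :
    (∑ μ, a μ * ∑ β, ((lx β μ + ∑ ν, P ν μ * G ν β) * b β + l β * dY β μ))
      - (∑ μ, b μ * ∑ β, ((lx β μ + ∑ ν, P ν μ * G ν β) * a β + l β * dX β μ))
    = ((∑ α, ∑ β, G α β * b α * ∑ μ, (P β μ + N β μ) * a μ)
        - ∑ α, ∑ β, G α β * a α * ∑ μ, (P β μ + N β μ) * b μ)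
      + ∑ α, ∑ β, G α β * c α * ∑ μ, (a μ * dY β μ - b μ * dX β μ) := by
  have expand : ∀ (a b : Fin n → ℝ) (dZ : Fin n → Fin n → ℝ),
      (∑ μ, a μ * ∑ β, ((lx β μ + ∑ ν, P ν μ * G ν β) * b β + l β * dZ β μ))
      = ((∑ μ, ∑ β, a μ * b β * lx β μ)
          + ∑ μ, ∑ β, ∑ ν, a μ * P ν μ * G ν β * b β)
        + ∑ μ, ∑ β, a μ * l β * dZ β μ := by
    intro a b dZ
    rw [← Finset.sum_add_distrib, ← Finset.sum_add_distrib]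
    refine Finset.sum_congr rfl fun μ _ => ?_
    rw [Finset.mul_sum, ← Finset.sum_add_distrib, ← Finset.sum_add_distrib]
    refine Finset.sum_congr rfl fun β _ => ?_
    rw [show a μ * ((lx β μ + ∑ ν, P ν μ * G ν β) * b β + l β * dZ β μ)
        = a μ * b β * lx β μ + (∑ ν, P ν μ * G ν β) * (a μ * b β) + a μ * l β * dZ β μ
        by ring, Finset.sum_mul]
    congr 2
    exact Finset.sum_congr rfl fun ν _ => by ring
  have expandR : ∀ (a b : Fin n → ℝ),
      (∑ α, ∑ β, G α β * b α * ∑ μ, (P β μ + N β μ) * a μ)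
      = (∑ μ, ∑ β, ∑ ν, a μ * P ν μ * G ν β * b β)
        + ∑ α, ∑ μ, b α * a μ * (∑ β, G α β * N β μ) := by
    intro a b
    have h1 : ∀ α β, G α β * b α * (∑ μ, (P β μ + N β μ) * a μ)
        = (∑ μ, G α β * b α * (P β μ * a μ)) + ∑ μ, G α β * b α * (N β μ * a μ) := by
      intro α β
      rw [Finset.mul_sum, ← Finset.sum_add_distrib]
      exact Finset.sum_congr rfl fun μ _ => by ring
    simp only [h1, Finset.sum_add_distrib]
    congr 1
    · have hs : ∀ α : Fin n, (∑ β, ∑ μ, G α β * b α * (P β μ * a μ))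
          = ∑ μ, ∑ β, G α β * b α * (P β μ * a μ) := fun α => Finset.sum_comm
      simp only [hs]
      rw [Finset.sum_comm]
      exact Finset.sum_congr rfl fun μ _ => Finset.sum_congr rfl fun α _ =>
        Finset.sum_congr rfl fun β _ => by rw [hsym α β]; ring
    · refine Finset.sum_congr rfl fun α _ => ?_
      rw [Finset.sum_comm]
      refine Finset.sum_congr rfl fun μ _ => ?_
      rw [Finset.mul_sum]
      exact Finset.sum_congr rfl fun β _ => by ring
  have expandR3 : (∑ α, ∑ β, G α β * c α * ∑ μ, (a μ * dY β μ - b μ * dX β μ))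
      = (∑ μ, ∑ β, a μ * l β * dY β μ) - (∑ μ, ∑ β, b μ * l β * dX β μ) := by
    rw [Finset.sum_comm]
    have h2 : ∀ β, (∑ α, G α β * c α * ∑ μ, (a μ * dY β μ - b μ * dX β μ))
        = (∑ μ, a μ * l β * dY β μ) - ∑ μ, b μ * l β * dX β μ := by
      intro β
      rw [show (∑ α, G α β * c α * ∑ μ, (a μ * dY β μ - b μ * dX β μ))
          = (∑ α, G α β * c α) * ∑ μ, (a μ * dY β μ - b μ * dX β μ) by
        rw [Finset.sum_mul], heuler β, Finset.mul_sum, ← Finset.sum_sub_distrib]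
      exact Finset.sum_congr rfl fun μ _ => by ring
    simp only [h2]
    rw [Finset.sum_sub_distrib]
    congr 1 <;> rw [Finset.sum_comm]
  have swap2 : (∑ α, ∑ μ, a α * b μ * (∑ β, G α β * N β μ))
      = ∑ α, ∑ μ, b α * a μ * (∑ β, G μ β * N β α) := by
    rw [Finset.sum_comm]
    exact Finset.sum_congr rfl fun α _ => Finset.sum_congr rfl fun μ _ => by ring
  have hstarsum : (∑ α, ∑ μ, b α * a μ * (∑ β, G α β * N β μ))
        - (∑ α, ∑ μ, a α * b μ * (∑ β, G α β * N β μ))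
      = (∑ μ, ∑ β, a μ * b β * lx β μ) - ∑ μ, ∑ β, b μ * a β * lx β μ := by
    rw [swap2, ← Finset.sum_sub_distrib]
    simp only [← Finset.sum_sub_distrib]
    have h4 : ∀ α μ, b α * a μ * (∑ β, G α β * N β μ) - b α * a μ * (∑ β, G μ β * N β α)
        = b α * a μ * lx α μ - b α * a μ * lx μ α := by
      intro α μ
      rw [← mul_sub, hstar α μ, mul_sub]
    simp only [h4]
    simp only [Finset.sum_sub_distrib]
    congr 1
    rw [Finset.sum_comm]
    exact Finset.sum_congr rfl fun μ _ => Finset.sum_congr rfl fun β _ => by ring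
  rw [expand a b dY, expand b a dX, expandR a b, expandR b a, expandR3]
  linarith [hstarsum]

section
variable {Ω : Set (Vec m × Vec m)} {L : Vec m → Vec m → ℝ}

theorem fderiv_gProd (hG : Good Ω L) {U : Set (Vec m)} (hU : IsOpen U) {u Z : Vec m → Vec m}
    (hu : ContDiffOn ℝ (⊤ : ℕ∞) u U) (huΩ : ∀ y ∈ U, (y, u y) ∈ Ω)
    (hZ : ContDiffOn ℝ (⊤ : ℕ∞) Z U) {x : Vec m} (hx : x ∈ U) (μ : Fin m) :
    fderiv ℝ (gProd L u u Z) x (Pi.single μ 1)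
      = ∑ β, ((pdx (pdv L β) μ x (u x) + ∑ ν, pde u ν μ x * gmet L x (u x) ν β) * Z x β
          + pdv L β x (u x) * pde Z β μ x) := by
  have hp : (x, u x) ∈ Ω := huΩ x hx
  have hux : DifferentiableAt ℝ u x :=
    (hu.differentiableOn (by simp)).differentiableAt (hU.mem_nhds hx)
  have hZx : DifferentiableAt ℝ Z x :=
    (hZ.differentiableOn (by simp)).differentiableAt (hU.mem_nhds hx)
  have hrepr : gProd L u u Z =ᶠ[nhds x] (fun y => ∑ β, pdv L β y (u y) * Z y β) := by
    refine Filter.eventually_of_mem (hU.mem_nhds hx) fun y hy => ?_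
    have hq : (y, u y) ∈ Ω := huΩ y hy
    show ∑ α, ∑ β, gmet L y (u y) α β * u y α * Z y β = _
    rw [Finset.sum_comm]
    refine Finset.sum_congr rfl fun β _ => ?_
    rw [show (∑ α, gmet L y (u y) α β * u y α * Z y β)
        = (∑ α, gmet L y (u y) β α * u y α) * Z y β by
      rw [Finset.sum_mul]
      exact Finset.sum_congr rfl fun α _ => by rw [gsym hG hq α β]]
    rw [eulerg hG hq β]
  rw [hrepr.fderiv_eq]
  have hFd : ∀ β : Fin m, DifferentiableAt ℝ (fun y => pdv L β y (u y)) x := by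
    intro β
    have h := (diffAt_unc hG.op (hG.nicel β) hp).comp x (differentiableAt_id.prodMk hux)
    exact h
  have hZβ : ∀ β : Fin m, DifferentiableAt ℝ (fun y => Z y β) x :=
    fun β => differentiableAt_pi.mp hZx β
  have hψ : HasFDerivAt (fun y => ∑ β, pdv L β y (u y) * Z y β)
      (∑ β, (pdv L β x (u x) • fderiv ℝ (fun y => Z y β) x
        + Z x β • fderiv ℝ (fun y => pdv L β y (u y)) x)) x :=
    HasFDerivAt.fun_sum fun β _ => (hFd β).hasFDerivAt.mul (hZβ β).hasFDerivAt
  rw [hψ.fderiv, ContinuousLinearMap.sum_apply]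
  refine Finset.sum_congr rfl fun β _ => ?_
  rw [ContinuousLinearMap.add_apply, ContinuousLinearMap.smul_apply,
    ContinuousLinearMap.smul_apply, smul_eq_mul, smul_eq_mul]
  rw [chain_rule hG.op (hG.nicel β) hux hp μ]
  show pdv L β x (u x) * pde Z β μ x
      + Z x β * (pdx (pdv L β) μ x (u x) + ∑ ν, pde u ν μ x * gmet L x (u x) ν β) = _
  ring

theorem main (hG : Good Ω L) {U : Set (Vec m)} (hU : IsOpen U) {u X Y : Vec m → Vec m}
    (hu : ContDiffOn ℝ (⊤ : ℕ∞) u U) (huΩ : ∀ y ∈ U, (y, u y) ∈ Ω)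
    (hX : ContDiffOn ℝ (⊤ : ℕ∞) X U) (hY : ContDiffOn ℝ (⊤ : ℕ∞) Y U) :
    ∀ x ∈ U, dirD X (gProd L u u Y) x - dirD Y (gProd L u u X) x
      = gProd L u Y (covD L u X) x - gProd L u X (covD L u Y) x
        + gProd L u u (lieB X Y) x := by
  intro x hx
  have hp : (x, u x) ∈ Ω := huΩ x hx
  have e1 : dirD X (gProd L u u Y) x
      = ∑ μ, X x μ * (∑ β, ((pdx (pdv L β) μ x (u x)
          + ∑ ν, pde u ν μ x * gmet L x (u x) ν β) * Y x β
          + pdv L β x (u x) * pde Y β μ x)) := by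
    refine Finset.sum_congr rfl fun μ _ => ?_
    rw [fderiv_gProd hG hU hu huΩ hY hx μ]
  have e2 : dirD Y (gProd L u u X) x
      = ∑ μ, Y x μ * (∑ β, ((pdx (pdv L β) μ x (u x)
          + ∑ ν, pde u ν μ x * gmet L x (u x) ν β) * X x β
          + pdv L β x (u x) * pde X β μ x)) := by
    refine Finset.sum_congr rfl fun μ _ => ?_
    rw [fderiv_gProd hG hU hu huΩ hX hx μ]
  have halg := final_algebra (n := m)
    (G := fun α β => gmet L x (u x) α β)
    (N := fun β μ => nConn L β μ x (u x))
    (P := fun ν μ => pde u ν μ x)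
    (lx := fun β μ => pdx (pdv L β) μ x (u x))
    (dX := fun β μ => pde X β μ x)
    (dY := fun β μ => pde Y β μ x)
    (l := fun β => pdv L β x (u x))
    (a := fun μ => X x μ) (b := fun μ => Y x μ) (c := fun μ => u x μ)
    (fun α β => gsym hG hp α β)
    (fun β => by
      show (∑ α, gmet L x (u x) α β * u x α) = pdv L β x (u x)
      rw [← eulerg hG hp β]
      exact Finset.sum_congr rfl fun α _ => by rw [gsym hG hp α β])
    (fun ε μ' => keystar hG hp ε μ')
  rw [e1, e2]
  exact halg
end

/-- Proposition (Prop. 2.2(ii), Eq. (doj)): `∂_X g_u(u,Y) − ∂_Y g_u(u,X)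
= g_u(Y, D_X u) − g_u(X, D_Y u) + g_u(u,[X,Y])` on `U`. -/
theorem statement1 {m : ℕ} (hm : 2 ≤ m)
    (Ω : Set (Vec m × Vec m)) (hΩopen : IsOpen Ω) (hΩne : Ω.Nonempty)
    (hΩslit : ∀ p ∈ Ω, p.2 ≠ 0)
    (hΩcone : ∀ p ∈ Ω, ∀ s : ℝ, 0 < s → (p.1, s • p.2) ∈ Ω)
    (L : Vec m → Vec m → ℝ)
    (hLsmooth : ContDiffOn ℝ (⊤ : ℕ∞) (fun p : Vec m × Vec m => L p.1 p.2) Ω)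
    (hLhom : ∀ p ∈ Ω, ∀ s : ℝ, 0 < s → L p.1 (s • p.2) = s ^ 2 * L p.1 p.2)
    (hLinv : ∀ p ∈ Ω, IsUnit (gmet L p.1 p.2).det)
    (U : Set (Vec m)) (hUopen : IsOpen U)
    (u : Vec m → Vec m) (husmooth : ContDiffOn ℝ (⊤ : ℕ∞) u U)
    (huΩ : ∀ x ∈ U, (x, u x) ∈ Ω)
    (X Y : Vec m → Vec m) (hXsmooth : ContDiffOn ℝ (⊤ : ℕ∞) X U)
    (hYsmooth : ContDiffOn ℝ (⊤ : ℕ∞) Y U) :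
    ∀ x ∈ U,
      dirD X (gProd L u u Y) x - dirD Y (gProd L u u X) x
        = gProd L u Y (covD L u X) x - gProd L u X (covD L u Y) x
          + gProd L u u (lieB X Y) x := by
  exact main ⟨hΩopen, hΩcone, hLsmooth, hLhom, hLinv⟩ hUopen husmooth huΩ hXsmooth hYsmooth
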